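/- arXiv:math/0411111 — 2 statements merged into one kernel-verified Lean document; each statement's English description precedes it below -/
import Mathlib

section
/- Fix integers n ≥ 1, r ≥ 1, s ≥ 0. Let A_1,…,A_r and Ω_0,…,Ω_s be n×n matrices with entries in ℂ[ħ][[Q^1,…,Q^r,t^0,…,t^s]] such that the first-order operators ∇^a := ħ Q^a ∂/∂Q^a + A_a (1 ≤ a ≤ r) and ∇_i := ħ ∂/∂t^i + Ω_i (0 ≤ i ≤ s), acting on length-n column vectors over ℂ((ħ^{-1}))[[Q,t]], pairwise commute, and such that p_a := A_a|_{Q=t=0} has entries in ℂ (i.e. is independent of ħ). Then there exists a unique n×n matrix L with entries in ℂ((ħ^{-1}))[[Q,t]] satisfying ħ ∂L/∂t^i + Ω_i L = 0 for all 0 ≤ i ≤ s, ħ Q^a ∂L/∂Q^a + A_a L − L p_a = 0 for all 1 ≤ a ≤ r, and L|_{Q=t=0} = Id_n. -/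
noncomputable section

/-- `ℂ((ħ⁻¹))`, realized as formal Laurent series (Hahn series over `ℤ`) in the
variable `X = ħ⁻¹`; the coefficient of `ħ^k` is the coefficient at `z = -k`. -/
abbrev LH : Type := LaurentSeries ℂ

/-- The element `ħ = X⁻¹`: the Hahn series with single coefficient `1` in degree `-1`. -/
def hbar : LH := HahnSeries.single (-1 : ℤ) 1

/-- `f` lies in the subring `ℂ[ħ]` (no positive powers of the variable `X = ħ⁻¹`). -/
def InPolyH (f : LH) : Prop := ∀ z : ℤ, 0 < z → f.coeff z = 0

/-- `f` lies in the subring `ℂ[[ħ⁻¹]]`. -/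
def InPSinv (f : LH) : Prop := ∀ z : ℤ, z < 0 → f.coeff z = 0

/-- `f` lies in `ħ⁻¹ · ℂ[[ħ⁻¹]]` (only strictly negative powers of `ħ`). -/
def InPSinvPos (f : LH) : Prop := ∀ z : ℤ, z ≤ 0 → f.coeff z = 0

/-- `f` is a constant (a complex scalar), i.e. independent of `ħ`. -/
def IsConstL (f : LH) : Prop := ∀ z : ℤ, z ≠ 0 → f.coeff z = 0

section ops

variable {σ R : Type} [CommRing R] {n : ℕ}

/-- Formal partial derivative `∂/∂x` on multivariate formal power series. -/
def pd (x : σ) (f : MvPowerSeries σ R) : MvPowerSeries σ R :=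
  fun d => ((d x + 1 : ℕ) : R) * MvPowerSeries.coeff (d + Finsupp.single x 1) f

/-- Euler derivative `x·∂/∂x` on multivariate formal power series. -/
def eulerD (x : σ) (f : MvPowerSeries σ R) : MvPowerSeries σ R :=
  fun d => ((d x : ℕ) : R) * MvPowerSeries.coeff d f

/-- Entrywise partial derivative of a matrix of power series. -/
def mpd (x : σ) (M : Matrix (Fin n) (Fin n) (MvPowerSeries σ R)) :
    Matrix (Fin n) (Fin n) (MvPowerSeries σ R) := M.map (pd x)

/-- Entrywise Euler derivative of a matrix of power series. -/
def meu (x : σ) (M : Matrix (Fin n) (Fin n) (MvPowerSeries σ R)) :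
    Matrix (Fin n) (Fin n) (MvPowerSeries σ R) := M.map (eulerD x)

/-- A constant matrix, viewed as a matrix of power series. -/
def mC (M : Matrix (Fin n) (Fin n) R) : Matrix (Fin n) (Fin n) (MvPowerSeries σ R) :=
  M.map (MvPowerSeries.C : R →+* MvPowerSeries σ R)

/-- Constant term (restriction to `Q = t = 0`) of a matrix of power series. -/
def m0 (M : Matrix (Fin n) (Fin n) (MvPowerSeries σ R)) : Matrix (Fin n) (Fin n) R :=
  M.map (MvPowerSeries.constantCoeff : MvPowerSeries σ R →+* R)

end ops

section lops

variable {σ : Type} {n : ℕ}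

/-- The scalar `ħ` inside `ℂ((ħ⁻¹))[[Q,t]]`. -/
def hbarC (σ : Type) : MvPowerSeries σ LH := (MvPowerSeries.C : LH →+* MvPowerSeries σ LH) hbar

/-- The entries of the matrix `M` lie in `ℂ[ħ][[Q,t]]`. -/
def MatPolyH (M : Matrix (Fin n) (Fin n) (MvPowerSeries σ LH)) : Prop :=
  ∀ (i j : Fin n) (d : σ →₀ ℕ), InPolyH (MvPowerSeries.coeff d (M i j))

/-- The entries of the matrix `M` lie in `ℂ[[Q,t]]`, i.e. are independent of `ħ`. -/
def MatNoH (M : Matrix (Fin n) (Fin n) (MvPowerSeries σ LH)) : Prop :=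
  ∀ (i j : Fin n) (d : σ →₀ ℕ), IsConstL (MvPowerSeries.coeff d (M i j))

/-- The first-order operator `v ↦ ħ·(x ∂/∂x)v + A·v` on column vectors. -/
def nablaE (x : σ) (A : Matrix (Fin n) (Fin n) (MvPowerSeries σ LH))
    (v : Fin n → MvPowerSeries σ LH) : Fin n → MvPowerSeries σ LH :=
  fun i => hbarC σ * eulerD x (v i) + A.mulVec v i

/-- The first-order operator `v ↦ ħ·(∂/∂x)v + A·v` on column vectors. -/
def nablaP (x : σ) (A : Matrix (Fin n) (Fin n) (MvPowerSeries σ LH))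
    (v : Fin n → MvPowerSeries σ LH) : Fin n → MvPowerSeries σ LH :=
  fun i => hbarC σ * pd x (v i) + A.mulVec v i

end lops


/-!
Write `L = ∑_d L_d · (Q,t)^d` with `L_d` a matrix over `ℂ((ħ⁻¹))`. At a monomial `d`, the
coefficient of the `t^j`-equation at `d - t^j` is `d_j ħ L_d + (terms in L_e, e < d)`, and the
coefficient of the `Q^a`-equation at `d` is `T(L_d) + (terms in L_e, e < d)` with
`T X = d_a ħ X + [p_a, X]`. Since `p_a` does not involve `ħ`, comparing lowest powers of `ħ⁻¹`
shows that `T` is injective, hence bijective, when `d_a ≠ 0`. So solving one of these equations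
per monomial determines `L` uniquely by well-founded recursion on monomials.

The other equations then hold by flatness: the residues `R_i = ∇_i L` and `S_a = ∇^a L - L p_a`
satisfy `∇_j R_i = ∇_i R_j`, `∇_j S_a = ∇^a R_j - R_j p_a` and
`∇^b S_a - S_a p_b = ∇^a S_b - S_b p_a` (using `[p_a, p_b] = 0`, the constant term of flatness),
and these identities propagate the vanishing of the residues from lower to higher monomials.
-/

namespace QuantumDModule

open Finset
open scoped Matrix

section ShiftedAd

variable {n : ℕ}

lemma hbar_ne_zero : hbar ≠ 0 := HahnSeries.single_ne_zero one_ne_zero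

lemma natCast_mul_hbar_ne_zero {m : ℕ} (hm : m ≠ 0) : (m : LH) * hbar ≠ 0 := by
  refine mul_ne_zero ?_ hbar_ne_zero
  rw [← map_natCast (HahnSeries.C (Γ := ℤ) (R := ℂ))]
  exact HahnSeries.C_ne_zero (Nat.cast_ne_zero.mpr hm)

lemma coeff_hbar_mul (f : LH) (z : ℤ) : (hbar * f).coeff z = f.coeff (z + 1) := by
  simpa [hbar] using HahnSeries.coeff_single_mul_add (r := (1 : ℂ)) (x := f) (a := z + 1) (b := -1)

lemma coeff_mul_of_isConstL {g : LH} (hg : IsConstL g) (f : LH) (z : ℤ) :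
    (g * f).coeff z = g.coeff 0 * f.coeff z := by
  have hC : g = HahnSeries.C (g.coeff 0) := by
    ext w
    by_cases hw : w = 0
    · simp [hw]
    · rw [hg w hw, HahnSeries.C_apply, HahnSeries.coeff_single_of_ne hw]
  conv_lhs => rw [hC]
  rw [HahnSeries.C_mul_eq_smul, HahnSeries.coeff_smul, smul_eq_mul]

/-- `X ↦ m ħ X + [P, X]`: the part of `∇^a L - L p_a` at a monomial of `Q^a`-degree `m` that
involves the coefficient of `L` at that monomial (with `P = p_a`). -/
def shiftedAd (P : Matrix (Fin n) (Fin n) LH) (m : ℕ) :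
    Module.End LH (Matrix (Fin n) (Fin n) LH) :=
  ((m : LH) * hbar) • LinearMap.id + (LinearMap.mulLeft LH P - LinearMap.mulRight LH P)

lemma shiftedAd_apply (P : Matrix (Fin n) (Fin n) LH) (m : ℕ) (X : Matrix (Fin n) (Fin n) LH) :
    shiftedAd P m X = ((m : LH) * hbar) • X + (P * X - X * P) := rfl

lemma map_coeff_shiftedAd {P : Matrix (Fin n) (Fin n) LH} (hP : ∀ i j, IsConstL (P i j))
    (m : ℕ) (X : Matrix (Fin n) (Fin n) LH) (z : ℤ) :
    (shiftedAd P m X).map (·.coeff z) = (m : ℂ) • X.map (·.coeff (z + 1)) +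
      (P.map (·.coeff 0) * X.map (·.coeff z) - X.map (·.coeff z) * P.map (·.coeff 0)) := by
  ext i j
  simp only [shiftedAd_apply, Matrix.map_apply, Matrix.add_apply, Matrix.sub_apply,
    Matrix.smul_apply, smul_eq_mul, Matrix.mul_apply, HahnSeries.coeff_add, HahnSeries.coeff_sub,
    HahnSeries.coeff_sum]
  rw [mul_assoc, ← map_natCast (HahnSeries.C (Γ := ℤ) (R := ℂ)), HahnSeries.C_mul_eq_smul,
    HahnSeries.coeff_smul, coeff_hbar_mul, smul_eq_mul]
  congr 2 <;> refine Finset.sum_congr rfl fun k _ => ?_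
  · exact coeff_mul_of_isConstL (hP i k) _ z
  · rw [mul_comm, coeff_mul_of_isConstL (hP k j), mul_comm]

lemma exists_forall_lt_map_coeff_eq_zero (X : Matrix (Fin n) (Fin n) LH) :
    ∃ b : ℤ, ∀ z < b, X.map (·.coeff z) = 0 := by
  obtain ⟨b, hb⟩ := Finite.exists_ge fun q : Fin n × Fin n => (X q.1 q.2).order
  refine ⟨b, fun z hz => Matrix.ext fun i j => ?_⟩
  by_cases hX : X i j = 0
  · simp [hX]
  · exact HahnSeries.coeff_eq_zero_of_lt_order (hz.trans_le (hb (i, j)))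

lemma shiftedAd_injective {P : Matrix (Fin n) (Fin n) LH} (hP : ∀ i j, IsConstL (P i j))
    {m : ℕ} (hm : m ≠ 0) : Function.Injective (shiftedAd P m) := by
  rw [← LinearMap.ker_eq_bot, LinearMap.ker_eq_bot']
  intro X hX
  by_contra hX0
  have hsupp : ∃ z, X.map (·.coeff z) ≠ 0 := by
    contrapose! hX0
    ext i j z
    simpa using congrFun (congrFun (hX0 z) i) j
  obtain ⟨b, hb⟩ := exists_forall_lt_map_coeff_eq_zero X
  obtain ⟨z₀, hz₀, hmin⟩ := Int.exists_least_of_bdd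
    ⟨b, fun z hz => not_lt.mp fun h => hz (hb z h)⟩ hsupp
  have hprev : X.map (·.coeff (z₀ - 1)) = 0 := by
    by_contra h
    linarith [hmin _ h]
  -- at the least `z₀` with `X_{z₀} ≠ 0`, the coefficient of the image at `z₀ - 1` is `m X_{z₀}`
  have hcoeff := map_coeff_shiftedAd hP m X (z₀ - 1)
  rw [hX, hprev, sub_add_cancel] at hcoeff
  simp only [Matrix.mul_zero, Matrix.zero_mul, sub_zero, add_zero] at hcoeff
  have hm' : (m : ℂ) ≠ 0 := Nat.cast_ne_zero.mpr hm
  exact hz₀ ((smul_eq_zero_iff_right hm').mp (hcoeff.symm.trans (by ext; simp)))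

lemma shiftedAd_surjective {P : Matrix (Fin n) (Fin n) LH} (hP : ∀ i j, IsConstL (P i j))
    {m : ℕ} (hm : m ≠ 0) : Function.Surjective (shiftedAd P m) :=
  LinearMap.injective_iff_surjective.mp (shiftedAd_injective hP hm)

end ShiftedAd

section Monomials

variable {σ : Type}

lemma sub_single_one_lt {d : σ →₀ ℕ} {x : σ} (hx : d x ≠ 0) : d - .single x 1 < d :=
  lt_of_le_of_ne tsub_le_self fun h => by
    have := congrArg (· x) h
    simp only [Finsupp.coe_tsub, Pi.sub_apply, Finsupp.single_eq_same] at this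
    omega

lemma sub_single_one_apply_add_one {d : σ →₀ ℕ} {x : σ} (hx : d x ≠ 0) :
    (d - .single x 1) x + 1 = d x := by
  simp only [Finsupp.coe_tsub, Pi.sub_apply, Finsupp.single_eq_same]
  omega

lemma snd_lt_of_mem_erase_antidiagonal [DecidableEq σ] {d : σ →₀ ℕ}
    {p : (σ →₀ ℕ) × (σ →₀ ℕ)} (hp : p ∈ (antidiagonal d).erase (0, d)) : p.2 < d := by
  obtain ⟨hne, hmem⟩ := Finset.mem_erase.mp hp
  refine lt_of_le_of_ne (HasAntidiagonal.antidiagonal.snd_le hmem) fun h => hne ?_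
  rw [HasAntidiagonal.mem_antidiagonal, h, add_eq_right] at hmem
  exact Prod.ext hmem h

lemma exists_inl_ne_zero {ι κ : Type} {d : ι ⊕ κ →₀ ℕ} (hd : d ≠ 0)
    (ht : ¬∃ j, d (.inr j) ≠ 0) : ∃ a, d (.inl a) ≠ 0 := by
  contrapose! hd
  push Not at ht
  ext (a | j)
  exacts [hd a, ht j]

end Monomials

section Operators

variable {σ : Type} {n : ℕ}

def coeffM (d : σ →₀ ℕ) (M : Matrix (Fin n) (Fin n) (MvPowerSeries σ LH)) :
    Matrix (Fin n) (Fin n) LH :=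
  M.map (MvPowerSeries.coeff d)

lemma ext_coeffM {M N : Matrix (Fin n) (Fin n) (MvPowerSeries σ LH)}
    (h : ∀ d, coeffM d M = coeffM d N) : M = N :=
  Matrix.ext fun i j => MvPowerSeries.ext fun d => congrFun (congrFun (h d) i) j

@[simp]
lemma coeffM_zero (d : σ →₀ ℕ) :
    coeffM d (0 : Matrix (Fin n) (Fin n) (MvPowerSeries σ LH)) = 0 := by
  ext; simp [coeffM]

lemma coeffM_sub (d : σ →₀ ℕ) (M N : Matrix (Fin n) (Fin n) (MvPowerSeries σ LH)) :
    coeffM d (M - N) = coeffM d M - coeffM d N := by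
  ext; simp [coeffM]

lemma m0_eq_coeffM (M : Matrix (Fin n) (Fin n) (MvPowerSeries σ LH)) : m0 M = coeffM 0 M := by
  ext; simp [m0, coeffM]

lemma coeffM_mul_mC (d : σ →₀ ℕ) (M : Matrix (Fin n) (Fin n) (MvPowerSeries σ LH))
    (P : Matrix (Fin n) (Fin n) LH) : coeffM d (M * mC P) = coeffM d M * P := by
  ext i j
  simp [coeffM, mC, Matrix.mul_apply, MvPowerSeries.coeff_mul_C]

lemma mC_mul (P Q : Matrix (Fin n) (Fin n) LH) :
    (mC P : Matrix (Fin n) (Fin n) (MvPowerSeries σ LH)) * mC Q = mC (P * Q) :=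
  (Matrix.map_mul (f := MvPowerSeries.C)).symm

lemma coeff_pd (x : σ) (f : MvPowerSeries σ LH) (d : σ →₀ ℕ) :
    MvPowerSeries.coeff d (pd x f) =
      ((d x + 1 : ℕ) : LH) * MvPowerSeries.coeff (d + .single x 1) f := rfl

lemma coeff_eulerD (x : σ) (f : MvPowerSeries σ LH) (d : σ →₀ ℕ) :
    MvPowerSeries.coeff d (eulerD x f) = ((d x : ℕ) : LH) * MvPowerSeries.coeff d f := rfl

def matNablaP (x : σ) (B M : Matrix (Fin n) (Fin n) (MvPowerSeries σ LH)) :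
    Matrix (Fin n) (Fin n) (MvPowerSeries σ LH) :=
  hbarC σ • mpd x M + B * M

def matNablaE (x : σ) (B M : Matrix (Fin n) (Fin n) (MvPowerSeries σ LH)) :
    Matrix (Fin n) (Fin n) (MvPowerSeries σ LH) :=
  hbarC σ • meu x M + B * M

/-- The operator `L ↦ ∇^a L - L p_a` of the statement, for `x = Q^a` and `B = A_a`. -/
def matNablaEp (x : σ) (B M : Matrix (Fin n) (Fin n) (MvPowerSeries σ LH)) :
    Matrix (Fin n) (Fin n) (MvPowerSeries σ LH) :=
  matNablaE x B M - M * mC (m0 B)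

lemma matNablaP_transpose_apply (x : σ) (B M : Matrix (Fin n) (Fin n) (MvPowerSeries σ LH))
    (k : Fin n) : (matNablaP x B M)ᵀ k = nablaP x B (Mᵀ k) := by
  ext i
  simp [matNablaP, nablaP, mpd, Matrix.mul_apply, Matrix.mulVec, dotProduct]

lemma matNablaE_transpose_apply (x : σ) (B M : Matrix (Fin n) (Fin n) (MvPowerSeries σ LH))
    (k : Fin n) : (matNablaE x B M)ᵀ k = nablaE x B (Mᵀ k) := by
  ext i
  simp [matNablaE, nablaE, meu, Matrix.mul_apply, Matrix.mulVec, dotProduct]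

lemma comm_of_transpose_apply {R : Type*}
    {F G : Matrix (Fin n) (Fin n) R → Matrix (Fin n) (Fin n) R}
    {f g : (Fin n → R) → Fin n → R} (hF : ∀ M k, (F M)ᵀ k = f (Mᵀ k))
    (hG : ∀ M k, (G M)ᵀ k = g (Mᵀ k)) (hfg : ∀ v, f (g v) = g (f v))
    (M : Matrix (Fin n) (Fin n) R) : F (G M) = G (F M) := by
  refine Matrix.transpose_injective (funext fun k => ?_)
  rw [hF, hG, hfg, ← hF, ← hG]

lemma meu_mC (x : σ) (P : Matrix (Fin n) (Fin n) LH) :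
    meu x (mC P : Matrix (Fin n) (Fin n) (MvPowerSeries σ LH)) = 0 := by
  ext i j d : 3
  by_cases hd : d = 0
  · simp [meu, mC, coeff_eulerD, hd]
  · simp [meu, mC, coeff_eulerD, MvPowerSeries.coeff_C_of_ne_zero hd]

lemma matNablaE_one (x : σ) (B : Matrix (Fin n) (Fin n) (MvPowerSeries σ LH)) :
    matNablaE x B 1 = B := by
  have h := meu_mC (σ := σ) x (1 : Matrix (Fin n) (Fin n) LH)
  rw [mC, Matrix.map_one _ (map_zero _) (map_one _)] at h
  ext i j : 1
  simp [matNablaE, h]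

variable [DecidableEq σ]

lemma coeffM_mul (d : σ →₀ ℕ) (M N : Matrix (Fin n) (Fin n) (MvPowerSeries σ LH)) :
    coeffM d (M * N) = ∑ p ∈ antidiagonal d, coeffM p.1 M * coeffM p.2 N := by
  ext i j : 1
  simp only [coeffM, Matrix.map_apply, Matrix.mul_apply, map_sum, MvPowerSeries.coeff_mul,
    Matrix.sum_apply]
  exact Finset.sum_comm

lemma coeffM_matNablaP (x : σ) (B M : Matrix (Fin n) (Fin n) (MvPowerSeries σ LH))
    (d : σ →₀ ℕ) :
    coeffM d (matNablaP x B M) = (((d x + 1 : ℕ) : LH) * hbar) • coeffM (d + .single x 1) M +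
      ∑ p ∈ antidiagonal d, coeffM p.1 B * coeffM p.2 M := by
  rw [← coeffM_mul]
  ext i j : 1
  simp [coeffM, matNablaP, mpd, coeff_pd, hbarC]
  ring

lemma coeffM_matNablaE (x : σ) (B M : Matrix (Fin n) (Fin n) (MvPowerSeries σ LH))
    (d : σ →₀ ℕ) :
    coeffM d (matNablaE x B M) = (((d x : ℕ) : LH) * hbar) • coeffM d M +
      ∑ p ∈ antidiagonal d, coeffM p.1 B * coeffM p.2 M := by
  rw [← coeffM_mul]
  ext i j : 1
  simp [coeffM, matNablaE, meu, coeff_eulerD, hbarC]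
  ring

lemma coeffM_zero_matNablaE (x : σ) (B M : Matrix (Fin n) (Fin n) (MvPowerSeries σ LH)) :
    coeffM 0 (matNablaE x B M) = coeffM 0 B * coeffM 0 M := by
  ext i j : 1
  simp [coeffM_matNablaE]

lemma coeffM_matNablaEp (x : σ) (B M : Matrix (Fin n) (Fin n) (MvPowerSeries σ LH))
    (d : σ →₀ ℕ) :
    coeffM d (matNablaEp x B M) = shiftedAd (m0 B) (d x) (coeffM d M) +
      ∑ p ∈ (antidiagonal d).erase (0, d), coeffM p.1 B * coeffM p.2 M := by
  rw [matNablaEp, coeffM_sub, coeffM_matNablaE, coeffM_mul_mC, shiftedAd_apply,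
    ← Finset.add_sum_erase _ _ (by simp : ((0 : σ →₀ ℕ), d) ∈ antidiagonal d), m0_eq_coeffM]
  abel

/- Scalar multiplication by `ℂ((ħ⁻¹))` on matrices is handled entrywise below: `rw`/`simp` with
the generic `smul_*` lemmas fail on it, as its instances agree with theirs only after unfolding. -/

lemma matNablaP_sub (x : σ) (B M N : Matrix (Fin n) (Fin n) (MvPowerSeries σ LH)) :
    matNablaP x B (M - N) = matNablaP x B M - matNablaP x B N :=
  ext_coeffM fun d => by
    ext i j : 1
    simp only [coeffM_matNablaP, coeffM_sub, Matrix.mul_sub, Finset.sum_sub_distrib,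
      Matrix.add_apply, Matrix.sub_apply, Matrix.smul_apply, smul_eq_mul]
    ring

lemma matNablaE_sub (x : σ) (B M N : Matrix (Fin n) (Fin n) (MvPowerSeries σ LH)) :
    matNablaE x B (M - N) = matNablaE x B M - matNablaE x B N :=
  ext_coeffM fun d => by
    ext i j : 1
    simp only [coeffM_matNablaE, coeffM_sub, Matrix.mul_sub, Finset.sum_sub_distrib,
      Matrix.add_apply, Matrix.sub_apply, Matrix.smul_apply, smul_eq_mul]
    ring

lemma matNablaEp_sub (x : σ) (B M N : Matrix (Fin n) (Fin n) (MvPowerSeries σ LH)) :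
    matNablaEp x B (M - N) = matNablaEp x B M - matNablaEp x B N := by
  simp only [matNablaEp, matNablaE_sub, Matrix.sub_mul]
  abel

lemma matNablaP_mul_mC (x : σ) (B M : Matrix (Fin n) (Fin n) (MvPowerSeries σ LH))
    (P : Matrix (Fin n) (Fin n) LH) : matNablaP x B (M * mC P) = matNablaP x B M * mC P :=
  ext_coeffM fun d => by
    simp only [coeffM_matNablaP, coeffM_mul_mC, Matrix.add_mul, Finset.sum_mul, Matrix.mul_assoc]
    ext i j : 1
    simp [Matrix.mul_apply, Matrix.smul_apply, smul_eq_mul, Finset.mul_sum, mul_assoc]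

lemma matNablaE_mul_mC (x : σ) (B M : Matrix (Fin n) (Fin n) (MvPowerSeries σ LH))
    (P : Matrix (Fin n) (Fin n) LH) : matNablaE x B (M * mC P) = matNablaE x B M * mC P :=
  ext_coeffM fun d => by
    simp only [coeffM_matNablaE, coeffM_mul_mC, Matrix.add_mul, Finset.sum_mul, Matrix.mul_assoc]
    ext i j : 1
    simp [Matrix.mul_apply, Matrix.smul_apply, smul_eq_mul, Finset.mul_sum, mul_assoc]

lemma coeffM_matNablaP_sub_single {x : σ} {d : σ →₀ ℕ} (hx : d x ≠ 0)
    (B M : Matrix (Fin n) (Fin n) (MvPowerSeries σ LH)) (hM : ∀ e < d, coeffM e M = 0) :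
    coeffM (d - .single x 1) (matNablaP x B M) = (((d x : ℕ) : LH) * hbar) • coeffM d M := by
  rw [coeffM_matNablaP, Finsupp.sub_add_single_one_cancel hx,
    Finset.sum_eq_zero fun p hp => by
      rw [hM p.2 ((HasAntidiagonal.antidiagonal.snd_le hp).trans_lt (sub_single_one_lt hx)),
        Matrix.mul_zero],
    add_zero, sub_single_one_apply_add_one hx]

lemma coeffM_matNablaEp_eq_shiftedAd (x : σ) {d : σ →₀ ℕ}
    (B M : Matrix (Fin n) (Fin n) (MvPowerSeries σ LH)) (hM : ∀ e < d, coeffM e M = 0) :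
    coeffM d (matNablaEp x B M) = shiftedAd (m0 B) (d x) (coeffM d M) := by
  rw [coeffM_matNablaEp, Finset.sum_eq_zero fun p hp => by
      rw [hM p.2 (snd_lt_of_mem_erase_antidiagonal hp), Matrix.mul_zero],
    add_zero]

lemma coeffM_matNablaP_eq_zero (x : σ) {d : σ →₀ ℕ}
    (B M : Matrix (Fin n) (Fin n) (MvPowerSeries σ LH)) (hM : ∀ e ≤ d, coeffM e M = 0)
    (hx : coeffM (d + .single x 1) M = 0) : coeffM d (matNablaP x B M) = 0 := by
  rw [coeffM_matNablaP, hx, Finset.sum_eq_zero fun p hp => by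
    rw [hM p.2 (HasAntidiagonal.antidiagonal.snd_le hp), Matrix.mul_zero], add_zero]
  ext i j : 1
  simp

lemma coeffM_matNablaEp_eq_zero (x : σ) {d : σ →₀ ℕ}
    (B M : Matrix (Fin n) (Fin n) (MvPowerSeries σ LH)) (hM : ∀ e ≤ d, coeffM e M = 0) :
    coeffM d (matNablaEp x B M) = 0 := by
  rw [coeffM_matNablaEp_eq_shiftedAd x B M fun e he => hM e he.le, hM d le_rfl, map_zero]

lemma coeffM_eq_zero_of_matNablaP {x : σ} {d : σ →₀ ℕ} (hx : d x ≠ 0)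
    {B M : Matrix (Fin n) (Fin n) (MvPowerSeries σ LH)} (hM : ∀ e < d, coeffM e M = 0)
    (h : coeffM (d - .single x 1) (matNablaP x B M) = 0) : coeffM d M = 0 := by
  rw [coeffM_matNablaP_sub_single hx B M hM] at h
  exact (smul_eq_zero.mp h).resolve_left (natCast_mul_hbar_ne_zero hx)

lemma coeffM_eq_zero_of_matNablaEp {x : σ} {d : σ →₀ ℕ} (hx : d x ≠ 0)
    {B M : Matrix (Fin n) (Fin n) (MvPowerSeries σ LH)} (hB : ∀ i j, IsConstL (m0 B i j))
    (hM : ∀ e < d, coeffM e M = 0) (h : coeffM d (matNablaEp x B M) = 0) : coeffM d M = 0 :=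
  shiftedAd_injective hB hx (by rw [← coeffM_matNablaEp_eq_shiftedAd x B M hM, h, map_zero])

end Operators

section Flatness

variable {ι κ : Type} {n : ℕ}

structure IsFlat (A : ι → Matrix (Fin n) (Fin n) (MvPowerSeries (ι ⊕ κ) LH))
    (Ω : κ → Matrix (Fin n) (Fin n) (MvPowerSeries (ι ⊕ κ) LH)) : Prop where
  comm_EE : ∀ a b v, nablaE (.inl a) (A a) (nablaE (.inl b) (A b) v)
    = nablaE (.inl b) (A b) (nablaE (.inl a) (A a) v)
  comm_EP : ∀ a i v, nablaE (.inl a) (A a) (nablaP (.inr i) (Ω i) v)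
    = nablaP (.inr i) (Ω i) (nablaE (.inl a) (A a) v)
  comm_PP : ∀ i j v, nablaP (.inr i) (Ω i) (nablaP (.inr j) (Ω j) v)
    = nablaP (.inr j) (Ω j) (nablaP (.inr i) (Ω i) v)

namespace IsFlat

variable {A : ι → Matrix (Fin n) (Fin n) (MvPowerSeries (ι ⊕ κ) LH)}
  {Ω : κ → Matrix (Fin n) (Fin n) (MvPowerSeries (ι ⊕ κ) LH)}

lemma matNablaP_comm (hflat : IsFlat A Ω) (i j : κ)
    (M : Matrix (Fin n) (Fin n) (MvPowerSeries (ι ⊕ κ) LH)) :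
    matNablaP (.inr i) (Ω i) (matNablaP (.inr j) (Ω j) M)
      = matNablaP (.inr j) (Ω j) (matNablaP (.inr i) (Ω i) M) :=
  comm_of_transpose_apply (matNablaP_transpose_apply _ _) (matNablaP_transpose_apply _ _)
    (hflat.comm_PP i j) M

lemma matNablaE_matNablaP_comm (hflat : IsFlat A Ω) (a : ι) (i : κ)
    (M : Matrix (Fin n) (Fin n) (MvPowerSeries (ι ⊕ κ) LH)) :
    matNablaE (.inl a) (A a) (matNablaP (.inr i) (Ω i) M)
      = matNablaP (.inr i) (Ω i) (matNablaE (.inl a) (A a) M) :=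
  comm_of_transpose_apply (matNablaE_transpose_apply _ _) (matNablaP_transpose_apply _ _)
    (hflat.comm_EP a i) M

lemma matNablaE_comm (hflat : IsFlat A Ω) (a b : ι)
    (M : Matrix (Fin n) (Fin n) (MvPowerSeries (ι ⊕ κ) LH)) :
    matNablaE (.inl a) (A a) (matNablaE (.inl b) (A b) M)
      = matNablaE (.inl b) (A b) (matNablaE (.inl a) (A a) M) :=
  comm_of_transpose_apply (matNablaE_transpose_apply _ _) (matNablaE_transpose_apply _ _)
    (hflat.comm_EE a b) M

variable [DecidableEq ι] [DecidableEq κ]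

lemma m0_comm (hflat : IsFlat A Ω) (a b : ι) : m0 (A a) * m0 (A b) = m0 (A b) * m0 (A a) := by
  simpa only [coeffM_zero_matNablaE, matNablaE_one, m0_eq_coeffM] using
    congrArg (coeffM 0) (hflat.matNablaE_comm a b 1)

lemma matNablaP_matNablaEp_comm (hflat : IsFlat A Ω) (i : κ) (a : ι)
    (M : Matrix (Fin n) (Fin n) (MvPowerSeries (ι ⊕ κ) LH)) :
    matNablaP (.inr i) (Ω i) (matNablaEp (.inl a) (A a) M)
      = matNablaEp (.inl a) (A a) (matNablaP (.inr i) (Ω i) M) := by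
  rw [matNablaEp, matNablaEp, matNablaP_sub, matNablaP_mul_mC, hflat.matNablaE_matNablaP_comm]

lemma matNablaEp_comm (hflat : IsFlat A Ω) (a b : ι)
    (M : Matrix (Fin n) (Fin n) (MvPowerSeries (ι ⊕ κ) LH)) :
    matNablaEp (.inl a) (A a) (matNablaEp (.inl b) (A b) M)
      = matNablaEp (.inl b) (A b) (matNablaEp (.inl a) (A a) M) := by
  simp only [matNablaEp, matNablaE_sub, matNablaE_mul_mC, Matrix.sub_mul, Matrix.mul_assoc, mC_mul,
    hflat.matNablaE_comm a b, hflat.m0_comm a b]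
  abel

end IsFlat

end Flatness

section FundamentalSolution

variable {ι κ : Type} [DecidableEq ι] [DecidableEq κ] {n : ℕ}
  (A : ι → Matrix (Fin n) (Fin n) (MvPowerSeries (ι ⊕ κ) LH))
  (Ω : κ → Matrix (Fin n) (Fin n) (MvPowerSeries (ι ⊕ κ) LH))

open scoped Classical in
/-- The coefficient at `d` of the fundamental solution in terms of the coefficients `F e` for
`e < d`: it solves the coefficient of the `t^j`-equation at `d - t^j` if `d` involves some `t^j`,
and otherwise that of a `Q^a`-equation at `d`. -/
def coeffStep (F : (ι ⊕ κ →₀ ℕ) → Matrix (Fin n) (Fin n) LH) (d : ι ⊕ κ →₀ ℕ) :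
    Matrix (Fin n) (Fin n) LH :=
  if d = 0 then 1
  else if h : ∃ j, d (.inr j) ≠ 0 then
    -(((d (.inr h.choose) : ℕ) : LH) * hbar)⁻¹ •
      ∑ p ∈ antidiagonal (d - .single (.inr h.choose) 1), coeffM p.1 (Ω h.choose) * F p.2
  else if h : ∃ a, d (.inl a) ≠ 0 then
    Function.invFun (shiftedAd (m0 (A h.choose)) (d (.inl h.choose)))
      (-∑ p ∈ (antidiagonal d).erase (0, d), coeffM p.1 (A h.choose) * F p.2)
  else 0

lemma coeffStep_congr {F G : (ι ⊕ κ →₀ ℕ) → Matrix (Fin n) (Fin n) LH} {d : ι ⊕ κ →₀ ℕ}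
    (h : ∀ e < d, F e = G e) : coeffStep A Ω F d = coeffStep A Ω G d := by
  unfold coeffStep
  split_ifs with h0 ht hq
  · rfl
  · refine congrArg _ (Finset.sum_congr rfl fun p hp => ?_)
    rw [h p.2 ((HasAntidiagonal.antidiagonal.snd_le hp).trans_lt
      (sub_single_one_lt ht.choose_spec))]
  · refine congrArg _ (congrArg _ (Finset.sum_congr rfl fun p hp => ?_))
    rw [h p.2 (snd_lt_of_mem_erase_antidiagonal hp)]
  · rfl

open scoped Classical in
def fundCoeff : (ι ⊕ κ →₀ ℕ) → Matrix (Fin n) (Fin n) LH :=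
  WellFoundedLT.fix fun d rec => coeffStep A Ω (fun e => if h : e < d then rec e h else 0) d

lemma fundCoeff_eq (d : ι ⊕ κ →₀ ℕ) : fundCoeff A Ω d = coeffStep A Ω (fundCoeff A Ω) d := by
  rw [fundCoeff, WellFoundedLT.fix_eq]
  exact coeffStep_congr A Ω fun e he => dif_pos he

def fundSol : Matrix (Fin n) (Fin n) (MvPowerSeries (ι ⊕ κ) LH) :=
  Matrix.of fun i k => (fun d => fundCoeff A Ω d i k : MvPowerSeries (ι ⊕ κ) LH)

lemma coeffM_fundSol (d : ι ⊕ κ →₀ ℕ) : coeffM d (fundSol A Ω) = fundCoeff A Ω d := rfl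

lemma m0_fundSol : m0 (fundSol A Ω) = 1 := by
  rw [m0_eq_coeffM, coeffM_fundSol, fundCoeff_eq, coeffStep, if_pos rfl]

lemma exists_coeffM_matNablaP_fundSol_eq_zero {d : ι ⊕ κ →₀ ℕ} (h : ∃ j, d (.inr j) ≠ 0) :
    ∃ j, d (.inr j) ≠ 0 ∧
      coeffM (d - .single (.inr j) 1) (matNablaP (.inr j) (Ω j) (fundSol A Ω)) = 0 := by
  have hd : d ≠ 0 := by rintro rfl; exact h.choose_spec rfl
  have hc := natCast_mul_hbar_ne_zero h.choose_spec
  refine ⟨h.choose, h.choose_spec, ?_⟩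
  rw [coeffM_matNablaP, Finsupp.sub_add_single_one_cancel h.choose_spec, coeffM_fundSol,
    fundCoeff_eq, coeffStep, if_neg hd, dif_pos h, sub_single_one_apply_add_one h.choose_spec]
  ext i k : 1
  simp only [coeffM_fundSol, Matrix.add_apply, Matrix.smul_apply, smul_eq_mul, Matrix.zero_apply]
  have := hbar_ne_zero
  have := left_ne_zero_of_mul hc
  field_simp
  ring

lemma exists_coeffM_matNablaEp_fundSol_eq_zero (hp : ∀ a i j, IsConstL (m0 (A a) i j))
    {d : ι ⊕ κ →₀ ℕ} (hd : d ≠ 0) (ht : ¬∃ j, d (.inr j) ≠ 0) :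
    ∃ a, d (.inl a) ≠ 0 ∧ coeffM d (matNablaEp (.inl a) (A a) (fundSol A Ω)) = 0 := by
  have hq := exists_inl_ne_zero hd ht
  refine ⟨hq.choose, hq.choose_spec, ?_⟩
  rw [coeffM_matNablaEp, coeffM_fundSol, fundCoeff_eq, coeffStep, if_neg hd, dif_neg ht,
    dif_pos hq, Function.rightInverse_invFun (shiftedAd_surjective (hp _) hq.choose_spec)]
  exact neg_add_cancel _

lemma matNablaP_fundSol (hflat : IsFlat A Ω) (i : κ) :
    matNablaP (.inr i) (Ω i) (fundSol A Ω) = 0 := by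
  suffices h : ∀ d i, coeffM d (matNablaP (.inr i) (Ω i) (fundSol A Ω)) = 0 from
    ext_coeffM fun d => by rw [h d i, coeffM_zero]
  intro d
  induction d using WellFoundedLT.induction with
  | _ d ih =>
  intro i
  obtain ⟨j, hj, hres⟩ :=
    exists_coeffM_matNablaP_fundSol_eq_zero A Ω (d := d + .single (.inr i) 1) ⟨i, by simp⟩
  by_cases hji : j = i
  · rwa [hji, add_tsub_cancel_right] at hres
  have hdj : d (.inr j) ≠ 0 := by
    simpa [Finsupp.single_apply, Ne.symm hji] using hj
  -- compare the coefficients at `d - t^j` of `∇_j ∇_i L = ∇_i ∇_j L`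
  refine coeffM_eq_zero_of_matNablaP hdj (B := Ω j) (fun e he => ih e he i) ?_
  rw [← hflat.matNablaP_comm]
  refine coeffM_matNablaP_eq_zero _ _ _
    (fun e he => ih e (he.trans_lt (sub_single_one_lt hdj)) j) ?_
  rwa [Finsupp.sub_single_one_add hdj]

lemma matNablaEp_fundSol (hp : ∀ a i j, IsConstL (m0 (A a) i j)) (hflat : IsFlat A Ω) (a : ι) :
    matNablaEp (.inl a) (A a) (fundSol A Ω) = 0 := by
  suffices h : ∀ d a, coeffM d (matNablaEp (.inl a) (A a) (fundSol A Ω)) = 0 from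
    ext_coeffM fun d => by rw [h d a, coeffM_zero]
  intro d
  induction d using WellFoundedLT.induction with
  | _ d ih =>
  intro a
  by_cases hd : d = 0
  · subst hd
    rw [coeffM_matNablaEp_eq_shiftedAd _ _ _ fun _ he => (not_lt_zero he).elim, coeffM_fundSol,
      ← coeffM_fundSol, ← m0_eq_coeffM, m0_fundSol, shiftedAd_apply]
    ext i j : 1
    simp
  by_cases ht : ∃ j, d (.inr j) ≠ 0
  · obtain ⟨j, hj⟩ := ht
    refine coeffM_eq_zero_of_matNablaP hj (B := Ω j) (fun e he => ih e he a) ?_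
    rw [hflat.matNablaP_matNablaEp_comm, matNablaP_fundSol A Ω hflat]
    exact coeffM_matNablaEp_eq_zero _ _ _ fun e _ => coeffM_zero e
  · obtain ⟨b, hb, hres⟩ := exists_coeffM_matNablaEp_fundSol_eq_zero A Ω hp hd ht
    -- `∇^b S_a - S_a p_b = ∇^a S_b - S_b p_a`, and `S_b` vanishes at all `e ≤ d`
    refine coeffM_eq_zero_of_matNablaEp hb (hp b) (fun e he => ih e he a) ?_
    rw [hflat.matNablaEp_comm]
    refine coeffM_matNablaEp_eq_zero _ _ _ fun e he => ?_
    rcases he.lt_or_eq with he | rfl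
    exacts [ih e he b, hres]

lemma eq_zero_of_horizontal (hp : ∀ a i j, IsConstL (m0 (A a) i j))
    {M : Matrix (Fin n) (Fin n) (MvPowerSeries (ι ⊕ κ) LH)}
    (hP : ∀ j, matNablaP (.inr j) (Ω j) M = 0) (hE : ∀ a, matNablaEp (.inl a) (A a) M = 0)
    (h0 : m0 M = 0) : M = 0 := by
  refine ext_coeffM fun d => ?_
  rw [coeffM_zero]
  induction d using WellFoundedLT.induction with
  | _ d ih =>
  by_cases hd : d = 0
  · rw [hd, ← m0_eq_coeffM, h0]
  by_cases ht : ∃ j, d (.inr j) ≠ 0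
  · obtain ⟨j, hj⟩ := ht
    exact coeffM_eq_zero_of_matNablaP hj ih (by rw [hP j, coeffM_zero])
  · obtain ⟨a, ha⟩ := exists_inl_ne_zero hd ht
    exact coeffM_eq_zero_of_matNablaEp ha (hp a) ih (by rw [hE a, coeffM_zero])

def IsNormalizedFundSol (L : Matrix (Fin n) (Fin n) (MvPowerSeries (ι ⊕ κ) LH)) : Prop :=
  (∀ j, matNablaP (.inr j) (Ω j) L = 0) ∧ (∀ a, matNablaEp (.inl a) (A a) L = 0) ∧ m0 L = 1

lemma isNormalizedFundSol_fundSol (hp : ∀ a i j, IsConstL (m0 (A a) i j))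
    (hflat : IsFlat A Ω) : IsNormalizedFundSol A Ω (fundSol A Ω) :=
  ⟨matNablaP_fundSol A Ω hflat, matNablaEp_fundSol A Ω hp hflat, m0_fundSol A Ω⟩

lemma IsNormalizedFundSol.unique (hp : ∀ a i j, IsConstL (m0 (A a) i j))
    {L L' : Matrix (Fin n) (Fin n) (MvPowerSeries (ι ⊕ κ) LH)}
    (hL : IsNormalizedFundSol A Ω L) (hL' : IsNormalizedFundSol A Ω L') : L = L' := by
  refine sub_eq_zero.mp (eq_zero_of_horizontal A Ω hp (fun j => ?_) (fun a => ?_) ?_)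
  · rw [matNablaP_sub, hL.1 j, hL'.1 j, sub_self]
  · rw [matNablaEp_sub, hL.2.1 a, hL'.2.1 a, sub_self]
  · rw [m0_eq_coeffM, coeffM_sub, ← m0_eq_coeffM, ← m0_eq_coeffM, hL.2.2, hL'.2.2, sub_self]

end FundamentalSolution

end QuantumDModule

theorem statement0_general (n r s : ℕ)
    (A : Fin r → Matrix (Fin n) (Fin n) (MvPowerSeries (Fin r ⊕ Fin (s + 1)) LH))
    (Ω : Fin (s + 1) → Matrix (Fin n) (Fin n) (MvPowerSeries (Fin r ⊕ Fin (s + 1)) LH))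
    -- `p_a := A_a|_{Q=t=0}` has entries in `ℂ` (is independent of `ħ`)
    (hp : ∀ a i j, IsConstL (MvPowerSeries.constantCoeff (A a i j)))
    -- the operators `∇^a = ħ Q^a ∂/∂Q^a + A_a`, `∇_i = ħ ∂/∂t^i + Ω_i` pairwise commute
    (hQQ : ∀ a b v, nablaE (Sum.inl a) (A a) (nablaE (Sum.inl b) (A b) v)
         = nablaE (Sum.inl b) (A b) (nablaE (Sum.inl a) (A a) v))
    (hQT : ∀ a i v, nablaE (Sum.inl a) (A a) (nablaP (Sum.inr i) (Ω i) v)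
         = nablaP (Sum.inr i) (Ω i) (nablaE (Sum.inl a) (A a) v))
    (hTT : ∀ i j v, nablaP (Sum.inr i) (Ω i) (nablaP (Sum.inr j) (Ω j) v)
         = nablaP (Sum.inr j) (Ω j) (nablaP (Sum.inr i) (Ω i) v)) :
    ∃! L : Matrix (Fin n) (Fin n) (MvPowerSeries (Fin r ⊕ Fin (s + 1)) LH),
      (∀ i, hbarC (Fin r ⊕ Fin (s + 1)) • mpd (Sum.inr i) L + Ω i * L = 0) ∧
      (∀ a, hbarC (Fin r ⊕ Fin (s + 1)) • meu (Sum.inl a) L + A a * L - L * mC (m0 (A a)) = 0) ∧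
      m0 L = 1 :=
  have hflat : QuantumDModule.IsFlat A Ω := ⟨hQQ, hQT, hTT⟩
  ⟨QuantumDModule.fundSol A Ω, QuantumDModule.isNormalizedFundSol_fundSol A Ω hp hflat,
    fun _ hL => QuantumDModule.IsNormalizedFundSol.unique A Ω hp hL
      (QuantumDModule.isNormalizedFundSol_fundSol A Ω hp hflat)⟩

/-- existence and uniqueness of the normalized fundamental solution
of an abstract quantum D-module. -/
theorem statement0 (n r s : ℕ) (hn : 1 ≤ n) (hr : 1 ≤ r)
    (A : Fin r → Matrix (Fin n) (Fin n) (MvPowerSeries (Fin r ⊕ Fin (s + 1)) LH))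
    (Ω : Fin (s + 1) → Matrix (Fin n) (Fin n) (MvPowerSeries (Fin r ⊕ Fin (s + 1)) LH))
    -- entries of the connection matrices lie in `ℂ[ħ][[Q,t]]`
    (hA : ∀ a, MatPolyH (A a)) (hΩ : ∀ i, MatPolyH (Ω i))
    -- `p_a := A_a|_{Q=t=0}` has entries in `ℂ` (is independent of `ħ`)
    (hp : ∀ a i j, IsConstL (MvPowerSeries.constantCoeff (A a i j)))
    -- the operators `∇^a = ħ Q^a ∂/∂Q^a + A_a`, `∇_i = ħ ∂/∂t^i + Ω_i` pairwise commute
    (hQQ : ∀ a b v, nablaE (Sum.inl a) (A a) (nablaE (Sum.inl b) (A b) v)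
         = nablaE (Sum.inl b) (A b) (nablaE (Sum.inl a) (A a) v))
    (hQT : ∀ a i v, nablaE (Sum.inl a) (A a) (nablaP (Sum.inr i) (Ω i) v)
         = nablaP (Sum.inr i) (Ω i) (nablaE (Sum.inl a) (A a) v))
    (hTT : ∀ i j v, nablaP (Sum.inr i) (Ω i) (nablaP (Sum.inr j) (Ω j) v)
         = nablaP (Sum.inr j) (Ω j) (nablaP (Sum.inr i) (Ω i) v)) :
    ∃! L : Matrix (Fin n) (Fin n) (MvPowerSeries (Fin r ⊕ Fin (s + 1)) LH),
      (∀ i, hbarC (Fin r ⊕ Fin (s + 1)) • mpd (Sum.inr i) L + Ω i * L = 0) ∧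
      (∀ a, hbarC (Fin r ⊕ Fin (s + 1)) • meu (Sum.inl a) L + A a * L - L * mC (m0 (A a)) = 0) ∧
      m0 L = 1 :=
  statement0_general n r s A Ω hp hQQ hQT hTT
end
end

section
/- Fix integers N ≥ 1 and k ≥ 0. Let R = (ℂ[p]/(p^N))[λ] and let S = R[ħ,ħ^{-1}] be the ring of Laurent polynomials in ħ over R. For every integer m ≥ 1 the element p + mħ is invertible in S (since p is nilpotent). Define I = Σ_{d≥0} I_d Q^d ∈ S[[Q]], where I_d := (Π_{m=1}^{kd} (kp + mħ + λ)) · (Π_{m=1}^{d} (p + mħ))^{-N}, and let D be the operator on S[[Q]] given by D(f) = ħ Q (df/dQ) + p·f. Then D^N I = Q · Π_{m=1}^{k} (kD + mħ + λ) (I), where the k commuting operators kD + mħ + λ are composed and the result is multiplied by Q. -/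
/- Coefficientwise, `D` acts on `Q^d` as multiplication by `p + dħ` and `kD + mħ + λ` as multiplication
by `kp + (kd + m)ħ + λ`. So the relation says `(p + (d+1)ħ)^N I_{d+1} = Π_{m=1}^{k} (kp + (kd + m)ħ + λ) I_d`
for every `d`, which is the ratio of consecutive coefficients of `I`, together with `p^N I_0 = 0`
in degree zero. -/

noncomputable section

/-- `ℂ[p]/(p^N)`: the cohomology ring of `ℙ^{N-1}`. -/
abbrev QuotR (N : ℕ) : Type :=
  Polynomial ℂ ⧸ Ideal.span ({(Polynomial.X : Polynomial ℂ) ^ N} : Set (Polynomial ℂ))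

/-- `R = (ℂ[p]/(p^N))[λ]`. -/
abbrev Rr (N : ℕ) : Type := Polynomial (QuotR N)

/-- `S = R[ħ, ħ⁻¹]`: Laurent polynomials in `ħ` over `R`. -/
abbrev Sr (N : ℕ) : Type := LaurentPolynomial (Rr N)

instance instCommRingSr (N : ℕ) : CommRing (Sr N) :=
  @AddMonoidAlgebra.commRing (Rr N) ℤ inferInstance inferInstance

/-- The (nilpotent) class `p ∈ S`. -/
def pS (N : ℕ) : Sr N :=
  LaurentPolynomial.C (Polynomial.C
    (Ideal.Quotient.mk _ (Polynomial.X : Polynomial ℂ)))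

/-- The equivariant parameter `λ ∈ S`. -/
def lamS (N : ℕ) : Sr N := LaurentPolynomial.C (Polynomial.X : Rr N)

/-- The element `ħ ∈ S`. -/
def hbarS (N : ℕ) : Sr N := LaurentPolynomial.T 1

/-- The coefficient `I_d = (Π_{m=1}^{kd} (kp + mħ + λ)) · (Π_{m=1}^{d} (p + mħ))^{-N}`. -/
def Icoeff (N k : ℕ) (d : ℕ) : Sr N :=
  (∏ m ∈ Finset.Icc 1 (k * d), ((k : Sr N) * pS N + (m : Sr N) * hbarS N + lamS N)) *
    (Ring.inverse (∏ m ∈ Finset.Icc 1 d, (pS N + (m : Sr N) * hbarS N))) ^ N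

/-- The `I`-function `I = Σ_{d ≥ 0} I_d Q^d ∈ S[[Q]]`. -/
def Ifun (N k : ℕ) : PowerSeries (Sr N) := PowerSeries.mk (Icoeff N k)

/-- The operator `D = ħ Q d/dQ + p` on `S[[Q]]` (coefficientwise:
`(D f)_d = (ħ·d + p)·f_d`). -/
def Dop (N : ℕ) (f : PowerSeries (Sr N)) : PowerSeries (Sr N) :=
  PowerSeries.mk fun d =>
    hbarS N * (d : Sr N) * PowerSeries.coeff d f + pS N * PowerSeries.coeff d f

/-- The operator `kD + mħ + λ` on `S[[Q]]`. -/
def Eop (N k : ℕ) (m : ℕ) (f : PowerSeries (Sr N)) : PowerSeries (Sr N) :=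
  PowerSeries.C (k : Sr N) * Dop N f
    + PowerSeries.C ((m : Sr N) * hbarS N + lamS N) * f

/-- The composite operator `Π_{m=1}^{j} (kD + mħ + λ)`. -/
def EComp (N k : ℕ) : ℕ → PowerSeries (Sr N) → PowerSeries (Sr N)
  | 0 => id
  | j + 1 => fun f => Eop N k (j + 1) (EComp N k j f)


open Finset PowerSeries

theorem Finset.prod_Icc_one_add {M : Type*} [CommMonoid M] (f : ℕ → M) (a b : ℕ) :
    ∏ m ∈ Icc 1 (a + b), f m = (∏ m ∈ Icc 1 a, f m) * ∏ m ∈ Icc 1 b, f (a + m) := by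
  change ∏ m ∈ Ioc 0 (a + b), f m = (∏ m ∈ Ioc 0 a, f m) * ∏ m ∈ Ioc 0 b, f (a + m)
  have hshift : (Ioc 0 b).map (addLeftEmbedding a) = Ioc a (a + b) := by
    simp [map_add_left_Ioc]
  rw [← prod_Ioc_consecutive f (Nat.zero_le a) (Nat.le_add_right a b), ← hshift, prod_map]
  rfl

theorem Ring.pow_mul_mul_inverse_mul_pow {M₀ : Type*} [CommMonoidWithZero M₀] {u : M₀}
    (hu : IsUnit u) (a b : M₀) (n : ℕ) :
    u ^ n * (a * Ring.inverse (b * u) ^ n) = a * Ring.inverse b ^ n := by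
  have hcancel : u ^ n * Ring.inverse u ^ n = 1 := by
    rw [← mul_pow, Ring.mul_inverse_cancel u hu, one_pow]
  rw [Ring.mul_inverse_rev, mul_pow, mul_left_comm, ← mul_assoc (u ^ n), hcancel, one_mul]

theorem pS_pow_eq_zero (N : ℕ) : pS N ^ N = 0 := by
  have hX : (Ideal.Quotient.mk (Ideal.span {(Polynomial.X : Polynomial ℂ) ^ N})
      Polynomial.X) ^ N = 0 := by
    rw [← map_pow, Ideal.Quotient.eq_zero_iff_mem]
    exact Ideal.subset_span rfl
  rw [pS, ← map_pow, ← map_pow, hX, map_zero, map_zero]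

theorem isUnit_pS_add_natCast_mul_hbarS (N : ℕ) {m : ℕ} (hm : 1 ≤ m) :
    IsUnit (pS N + (m : Sr N) * hbarS N) := by
  have hmC : IsUnit (m : ℂ) := isUnit_iff_ne_zero.mpr (Nat.cast_ne_zero.mpr (by omega))
  have hmS : IsUnit (m : Sr N) := by simpa using hmC.map (algebraMap ℂ (Sr N))
  exact IsNilpotent.isUnit_add_right_of_commute ⟨N, pS_pow_eq_zero N⟩
    (hmS.mul (LaurentPolynomial.isUnit_T 1)) (Commute.all _ _)

theorem coeff_iterate_Dop (N n d : ℕ) (f : PowerSeries (Sr N)) :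
    coeff d ((Dop N)^[n] f) = (pS N + (d : Sr N) * hbarS N) ^ n * coeff d f := by
  induction n with
  | zero => simp
  | succ n ih =>
    rw [Function.iterate_succ_apply', Dop, coeff_mk, ih, pow_succ]
    ring

theorem coeff_EComp (N k j d : ℕ) (f : PowerSeries (Sr N)) :
    coeff d (EComp N k j f) =
      (∏ m ∈ Icc 1 j, ((k : Sr N) * pS N + ((k * d + m : ℕ) : Sr N) * hbarS N + lamS N)) *
        coeff d f := by
  induction j with
  | zero => simp [EComp]
  | succ j ih =>
    simp only [EComp]
    rw [Eop, map_add, coeff_C_mul, coeff_C_mul, Dop, coeff_mk, ih,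
      prod_Icc_succ_top (by omega)]
    push_cast
    ring

theorem pow_mul_Icoeff_succ (N k d : ℕ) :
    (pS N + ((d + 1 : ℕ) : Sr N) * hbarS N) ^ N * Icoeff N k (d + 1) =
      (∏ m ∈ Icc 1 k, ((k : Sr N) * pS N + ((k * d + m : ℕ) : Sr N) * hbarS N + lamS N)) *
        Icoeff N k d := by
  rw [Icoeff, Icoeff, mul_add_one, prod_Icc_one_add, prod_Icc_succ_top (by omega),
    Ring.pow_mul_mul_inverse_mul_pow (isUnit_pS_add_natCast_mul_hbarS N (by omega))]
  ring

theorem statement9_general (N k : ℕ) :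
    (∀ m : ℕ, 1 ≤ m → IsUnit (pS N + (m : Sr N) * hbarS N)) ∧
    (Dop N)^[N] (Ifun N k) = PowerSeries.X * EComp N k k (Ifun N k) := by
  refine ⟨fun m hm => isUnit_pS_add_natCast_mul_hbarS N hm, ext fun d => ?_⟩
  rw [coeff_iterate_Dop, Ifun, coeff_mk]
  cases d with
  | zero => simp [pS_pow_eq_zero]
  | succ d =>
    rw [coeff_succ_X_mul, coeff_EComp, coeff_mk]
    exact pow_mul_Icoeff_succ N k d

/-- the Picard–Fuchs relation `D^N I = Q · Π_{m=1}^{k}(kD + mħ + λ) I`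
satisfied by the equivariantly twisted `I`-function of `(ℙ^{N-1}, 𝒪(k))`; moreover
`p + mħ` is invertible in `S` for every `m ≥ 1`. -/
theorem statement9 (N k : ℕ) (hN : 1 ≤ N) :
    (∀ m : ℕ, 1 ≤ m → IsUnit (pS N + (m : Sr N) * hbarS N)) ∧
    (Dop N)^[N] (Ifun N k) = PowerSeries.X * EComp N k k (Ifun N k) :=
  statement9_general N k
end
end
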